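/- arXiv:2310.19028 — 4 statements merged into one kernel-verified Lean document; each statement's English description precedes it below -/
import Mathlib

section
/- Let ρ = Σ_{i=1}^D p_i · ρ_L^i ⊗ ρ_R^i be a separable state, where (p_i) is a probability distribution and ρ_L^i, ρ_R^i are density matrices on H_L and H_R respectively. Then there exist density matrices θ_L on H_L and θ_R on H_R such that ρ ⪯ D² · θ_L ⊗ θ_R. -/
open Matrix ComplexOrder Kronecker
open scoped MatrixOrder

/-!
Take for `θ_L`, `θ_R` the uniform averages of the `ρ_L^i` and of the `ρ_R^i`. Then
`D² θ_L ⊗ θ_R = Σ_{i,j} ρ_L^i ⊗ ρ_R^j`, which dominates its diagonal `Σ_i ρ_L^i ⊗ ρ_R^i` because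
every term is a Kronecker product of positive semidefinite matrices, and the diagonal dominates
`Σ_i p_i ρ_L^i ⊗ ρ_R^i` because `p_i ≤ 1`.
-/

theorem Finset.sum_diag_le_sum_sum {ι M : Type*} [AddCommMonoid M] [PartialOrder M]
    [IsOrderedAddMonoid M] (s : Finset ι) {f : ι → ι → M} (hf : ∀ i ∈ s, ∀ j ∈ s, 0 ≤ f i j) :
    ∑ i ∈ s, f i i ≤ ∑ i ∈ s, ∑ j ∈ s, f i j :=
  Finset.sum_le_sum fun i hi => Finset.single_le_sum (hf i hi) hi

namespace Matrix

theorem sum_kronecker_sum {ι κ l m n p α : Type*} [NonUnitalNonAssocSemiring α]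
    (s : Finset ι) (t : Finset κ) (A : ι → Matrix l m α) (B : κ → Matrix n p α) :
    (∑ i ∈ s, A i) ⊗ₖ (∑ j ∈ t, B j) = ∑ i ∈ s, ∑ j ∈ t, A i ⊗ₖ B j := by
  ext ⟨a, b⟩ ⟨c, d⟩
  simp [kroneckerMap_apply, Matrix.sum_apply, Finset.sum_mul_sum]

variable {ι n : Type*} [Fintype ι]

theorem PosSemidef.average {ρ : ι → Matrix n n ℂ} (hρ : ∀ i, (ρ i).PosSemidef) :
    ((Fintype.card ι : ℝ)⁻¹ • ∑ i, ρ i).PosSemidef :=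
  (posSemidef_sum _ fun i _ => hρ i).smul (by positivity)

theorem trace_average [Fintype n] [Nonempty ι] {ρ : ι → Matrix n n ℂ}
    (hρ : ∀ i, (ρ i).trace = 1) :
    ((Fintype.card ι : ℝ)⁻¹ • ∑ i, ρ i).trace = 1 := by
  simp [trace_sum, hρ]

theorem PosSemidef.smul_le_self_of_le_one {A : Matrix n n ℂ} (hA : A.PosSemidef) {c : ℝ}
    (hc : c ≤ 1) :
    c • A ≤ A := by
  rw [le_iff, ← one_smul ℝ A, smul_smul, mul_one, ← sub_smul]
  exact hA.smul (sub_nonneg.mpr hc)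

end Matrix

theorem separable_le_product_general {l r : Type*} [Fintype l] [Fintype r]
    (D : ℕ) (hD : 0 < D) (p : Fin D → ℝ)
    (hp : ∀ i, 0 ≤ p i) (hp1 : ∑ i, p i = 1)
    (ρL : Fin D → Matrix l l ℂ) (ρR : Fin D → Matrix r r ℂ)
    (hρL : ∀ i, (ρL i).PosSemidef) (hρLt : ∀ i, (ρL i).trace = 1)
    (hρR : ∀ i, (ρR i).PosSemidef) (hρRt : ∀ i, (ρR i).trace = 1) :
    ∃ θL : Matrix l l ℂ, ∃ θR : Matrix r r ℂ,
      θL.PosSemidef ∧ θL.trace = 1 ∧ θR.PosSemidef ∧ θR.trace = 1 ∧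
      (((D : ℝ) ^ 2) • (θL ⊗ₖ θR) - ∑ i, p i • (ρL i ⊗ₖ ρR i)).PosSemidef := by
  have : NeZero D := ⟨hD.ne'⟩
  refine ⟨_, _, .average hρL, trace_average hρLt, .average hρR, trace_average hρRt, ?_⟩
  have hproduct : ((D : ℝ) ^ 2) • (((Fintype.card (Fin D) : ℝ)⁻¹ • ∑ i, ρL i) ⊗ₖ
      ((Fintype.card (Fin D) : ℝ)⁻¹ • ∑ j, ρR j)) = ∑ i, ∑ j, ρL i ⊗ₖ ρR j := by
    rw [smul_kronecker, kronecker_smul, smul_smul, smul_smul, Fintype.card_fin,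
      sq, mul_inv_cancel_right₀ (by positivity), mul_inv_cancel₀ (by positivity), one_smul,
      sum_kronecker_sum]
  have hp_le_one (i : Fin D) : p i ≤ 1 :=
    hp1 ▸ Finset.single_le_sum (fun j _ => hp j) (Finset.mem_univ i)
  have hkron (i j : Fin D) : (ρL i ⊗ₖ ρR j).PosSemidef := (hρL i).kronecker (hρR j)
  rw [← le_iff, hproduct]
  calc ∑ i, p i • (ρL i ⊗ₖ ρR i) ≤ ∑ i, ρL i ⊗ₖ ρR i :=
        Finset.sum_le_sum fun i _ => (hkron i i).smul_le_self_of_le_one (hp_le_one i)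
    _ ≤ ∑ i, ∑ j, ρL i ⊗ₖ ρR j :=
        Finset.sum_diag_le_sum_sum _ fun i _ j _ => (hkron i j).nonneg

/-- a separable state `ρ = Σ_{i=1}^D p_i ρ_L^i ⊗ ρ_R^i` satisfies
`ρ ⪯ D² θ_L ⊗ θ_R` for some states `θ_L`, `θ_R`. -/
theorem separable_le_product {l r : Type*} [Fintype l] [DecidableEq l]
    [Fintype r] [DecidableEq r]
    (D : ℕ) (hD : 0 < D) (p : Fin D → ℝ)
    (hp : ∀ i, 0 ≤ p i) (hp1 : ∑ i, p i = 1)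
    (ρL : Fin D → Matrix l l ℂ) (ρR : Fin D → Matrix r r ℂ)
    (hρL : ∀ i, (ρL i).PosSemidef) (hρLt : ∀ i, (ρL i).trace = 1)
    (hρR : ∀ i, (ρR i).PosSemidef) (hρRt : ∀ i, (ρR i).trace = 1) :
    ∃ θL : Matrix l l ℂ, ∃ θR : Matrix r r ℂ,
      θL.PosSemidef ∧ θL.trace = 1 ∧ θR.PosSemidef ∧ θR.trace = 1 ∧
      (((D : ℝ) ^ 2) • (θL ⊗ₖ θR) - ∑ i, p i • (ρL i ⊗ₖ ρR i)).PosSemidef :=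
  separable_le_product_general D hD p hp hp1 ρL ρR hρL hρLt hρR hρRt
end

section
/- Let M = Σ_{i=1}^D α_i (L_i ⊗ R_i) be an operator on H_L ⊗ H_R with Frobenius norm ‖M‖₂ = 1, where L_i act on H_L and R_i act on H_R. Then there exist density matrices τ_L on H_L and τ_R on H_R such that M M† ⪯ D² (τ_L ⊗ τ_R). Consequently, the max mutual information of MM† satisfies I_max(L:R) ≤ 2 log D. -/
open Matrix ComplexOrder Kronecker

/-- Max mutual information `I_max(L:R)_ρ`: the minimum over product states
`σ_L ⊗ σ_R` of `log min {t : ρ ≤ t σ_L ⊗ σ_R}` (Loewner order). -/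
noncomputable def Imax {l r : Type*} [Fintype l] [DecidableEq l]
    [Fintype r] [DecidableEq r] (ρ : Matrix (l × r) (l × r) ℂ) : ℝ :=
  sInf {x : ℝ | ∃ σL : Matrix l l ℂ, ∃ σR : Matrix r r ℂ,
    σL.PosSemidef ∧ σL.trace = 1 ∧ σR.PosSemidef ∧ σR.trace = 1 ∧
    x = Real.log (sInf {t : ℝ | (t • (σL ⊗ₖ σR) - ρ).PosSemidef})}

/-!
Gram–Schmidt applied to the right factors `R_i` (for the Frobenius inner product
`⟪A, B⟫ = tr (Aᴴ B)`) rewrites `M = ∑ⱼ sⱼ • Eⱼ ⊗ₖ Fⱼ` with `sⱼ ≥ 0`, `‖Eⱼ‖₂ = ‖Fⱼ‖₂ = 1` and,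
by Pythagoras, `∑ⱼ sⱼ² = ‖M‖₂² = 1`. The operator Cauchy–Schwarz inequality
`(∑ⱼ Xⱼ)(∑ⱼ Xⱼ)ᴴ ⪯ D ∑ⱼ Xⱼ Xⱼᴴ` gives `M Mᴴ ⪯ D ∑ⱼ sⱼ² (Eⱼ Eⱼᴴ ⊗ₖ Fⱼ Fⱼᴴ)`, and adding the
positive off-diagonal terms bounds this by `D (∑ⱼ sⱼ Eⱼ Eⱼᴴ) ⊗ₖ (∑ₖ sₖ Fₖ Fₖᴴ) = D S² τ_L ⊗ₖ τ_R`,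
where `S = ∑ⱼ sⱼ ≤ √D` and `τ_L`, `τ_R` are the two normalized mixtures. The bound on `I_max`
only needs that every feasible `t` in its definition is at least `1` (take traces), which keeps
the nested infima away from their junk values.
-/

open scoped InnerProductSpace

theorem norm_sum_sq_eq_sum_norm_sq_of_pairwise_inner_eq_zero {𝕜 E ι : Type*} [RCLike 𝕜]
    [NormedAddCommGroup E] [InnerProductSpace 𝕜 E] {v : ι → E}
    (hv : Pairwise fun i j => ⟪v i, v j⟫_𝕜 = 0) (s : Finset ι) :
    ‖∑ i ∈ s, v i‖ ^ 2 = ∑ i ∈ s, ‖v i‖ ^ 2 := by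
  classical
  induction s using Finset.induction_on with
  | empty => simp
  | insert a s ha ih =>
    have horth : ⟪v a, ∑ i ∈ s, v i⟫_𝕜 = 0 :=
      (inner_sum _ _ _).trans (Finset.sum_eq_zero fun i hi => hv (ne_of_mem_of_not_mem hi ha).symm)
    rw [Finset.sum_insert ha, Finset.sum_insert ha, ← ih, @norm_add_sq 𝕜, horth, map_zero,
      mul_zero, add_zero]

theorem exists_norm_eq_one_smul {E : Type*} [NormedAddCommGroup E] [NormedSpace ℝ E]
    [Nontrivial E] (v : E) : ∃ u : E, ‖u‖ = 1 ∧ v = ‖v‖ • u := by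
  by_cases hv : v = 0
  · obtain ⟨u, hu⟩ := exists_norm_eq E zero_le_one
    exact ⟨u, hu, by simp [hv]⟩
  · exact ⟨‖v‖⁻¹ • v, norm_smul_inv_norm hv, (smul_inv_smul₀ (norm_ne_zero_iff.2 hv) v).symm⟩

namespace Matrix

variable {ι l m n p : Type*}

theorem sum_kronecker {α : Type*} [NonUnitalNonAssocSemiring α] (s : Finset ι)
    (A : ι → Matrix l m α) (B : Matrix n p α) : (∑ i ∈ s, A i) ⊗ₖ B = ∑ i ∈ s, A i ⊗ₖ B := by
  ext; simp [Matrix.sum_apply, Finset.sum_mul]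

theorem kronecker_sum {α : Type*} [NonUnitalNonAssocSemiring α] (s : Finset ι)
    (A : Matrix l m α) (B : ι → Matrix n p α) : A ⊗ₖ (∑ i ∈ s, B i) = ∑ i ∈ s, A ⊗ₖ B i := by
  ext; simp [Matrix.sum_apply, Finset.mul_sum]

noncomputable def frobeniusLinearEquiv (m n : Type*) :
    Matrix m n ℂ ≃ₗ[ℂ] EuclideanSpace ℂ (m × n) :=
  (LinearEquiv.curry ℂ ℂ m n).symm.trans (WithLp.linearEquiv 2 ℂ (m × n → ℂ)).symm

local notation "φ" => frobeniusLinearEquiv _ _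

theorem frobeniusLinearEquiv_apply (A : Matrix m n ℂ) :
    frobeniusLinearEquiv m n A = WithLp.toLp 2 (Function.uncurry A) := rfl

section Frobenius

variable [Fintype m] [Fintype n]

theorem inner_frobeniusLinearEquiv (A B : Matrix m n ℂ) :
    ⟪φ A, φ B⟫_ℂ = (Aᴴ * B).trace := by
  simp only [frobeniusLinearEquiv_apply, EuclideanSpace.inner_toLp_toLp, dotProduct,
    Fintype.sum_prod_type, trace, diag, mul_apply, conjTranspose_apply, RCLike.star_def, mul_comm]
  exact Finset.sum_comm

theorem trace_conjTranspose_mul_self_eq_norm_sq (A : Matrix m n ℂ) :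
    (Aᴴ * A).trace = ((‖φ A‖ ^ 2 : ℝ) : ℂ) := by
  rw [← inner_frobeniusLinearEquiv, inner_self_eq_norm_sq_to_K]
  norm_cast

theorem exists_norm_frobeniusLinearEquiv_eq_one_smul [Nonempty m] [Nonempty n]
    (A : Matrix m n ℂ) : ∃ E : Matrix m n ℂ, ‖φ E‖ = 1 ∧ A = ‖φ A‖ • E := by
  obtain ⟨u, hu, hA⟩ := exists_norm_eq_one_smul (φ A)
  refine ⟨(frobeniusLinearEquiv m n).symm u, by simpa using hu, ?_⟩
  conv_lhs => rw [← (frobeniusLinearEquiv m n).symm_apply_apply A, hA]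
  exact LinearMap.map_smul_of_tower (frobeniusLinearEquiv m n).symm.toLinearMap _ _

theorem exists_sum_kronecker_eq_sum_kronecker_orthogonal {D : ℕ} (A : Fin D → Matrix l p ℂ)
    (B : Fin D → Matrix m n ℂ) :
    ∃ (A' : Fin D → Matrix l p ℂ) (B' : Fin D → Matrix m n ℂ),
      Pairwise (fun j k => ⟪φ (B' j), φ (B' k)⟫_ℂ = 0) ∧
        ∑ i, A i ⊗ₖ B i = ∑ j, A' j ⊗ₖ B' j := by
  set g := InnerProductSpace.gramSchmidt ℂ (fun i => φ (B i))
  have hspan : ∀ i, ∃ c : Fin D → ℂ, ∑ j, c j • g j = φ (B i) := fun i =>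
    (Submodule.mem_span_range_iff_exists_fun ℂ).1 <| by
      rw [InnerProductSpace.span_gramSchmidt]
      exact Submodule.subset_span ⟨i, rfl⟩
  choose c hc using hspan
  refine ⟨fun j => ∑ i, c i j • A i, fun j => (frobeniusLinearEquiv m n).symm (g j),
    fun j k hjk => by simpa using InnerProductSpace.gramSchmidt_orthogonal ℂ _ hjk, ?_⟩
  have hB : ∀ i, B i = ∑ j, c i j • (frobeniusLinearEquiv m n).symm (g j) := fun i => by
    rw [← (frobeniusLinearEquiv m n).symm_apply_apply (B i), ← hc]
    simp only [map_sum, map_smul]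
  simp only [hB, kronecker_sum, sum_kronecker, kronecker_smul, smul_kronecker]
  exact Finset.sum_comm

variable [Fintype l] [Fintype p]

theorem inner_frobeniusLinearEquiv_kronecker (A A' : Matrix l p ℂ) (B B' : Matrix m n ℂ) :
    ⟪φ (A ⊗ₖ B), φ (A' ⊗ₖ B')⟫_ℂ = ⟪φ A, φ A'⟫_ℂ * ⟪φ B, φ B'⟫_ℂ := by
  simp only [inner_frobeniusLinearEquiv, conjTranspose_kronecker, ← mul_kronecker_mul,
    trace_kronecker]

theorem norm_frobeniusLinearEquiv_kronecker (A : Matrix l p ℂ) (B : Matrix m n ℂ) :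
    ‖φ (A ⊗ₖ B)‖ = ‖φ A‖ * ‖φ B‖ := by
  have h := inner_frobeniusLinearEquiv_kronecker A A B B
  simp only [inner_self_eq_norm_sq_to_K] at h
  exact (pow_left_inj₀ (norm_nonneg _) (by positivity) two_ne_zero).1
    (by rw [mul_pow]; exact_mod_cast h)

theorem exists_sum_kronecker_eq_sum_smul_kronecker_normalized [Nonempty l] [Nonempty p]
    [Nonempty m] [Nonempty n] {D : ℕ} (A : Fin D → Matrix l p ℂ) (B : Fin D → Matrix m n ℂ) :
    ∃ (s : Fin D → ℝ) (E : Fin D → Matrix l p ℂ) (F : Fin D → Matrix m n ℂ),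
      (∀ j, 0 ≤ s j) ∧ (∀ j, ‖φ (E j)‖ = 1) ∧ (∀ j, ‖φ (F j)‖ = 1) ∧
        ∑ i, A i ⊗ₖ B i = ∑ j, s j • (E j ⊗ₖ F j) ∧
        ‖φ (∑ i, A i ⊗ₖ B i)‖ ^ 2 = ∑ j, s j ^ 2 := by
  obtain ⟨A', B', horth, hsum⟩ := exists_sum_kronecker_eq_sum_kronecker_orthogonal A B
  choose E hE hA' using fun j => exists_norm_frobeniusLinearEquiv_eq_one_smul (A' j)
  choose F hF hB' using fun j => exists_norm_frobeniusLinearEquiv_eq_one_smul (B' j)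
  have hterm : ∀ j, A' j ⊗ₖ B' j = (‖φ (A' j)‖ * ‖φ (B' j)‖) • (E j ⊗ₖ F j) := fun j => by
    conv_lhs => rw [hA' j, hB' j]
    rw [smul_kronecker, kronecker_smul, smul_smul]
  refine ⟨fun j => ‖φ (A' j)‖ * ‖φ (B' j)‖, E, F, fun j => by positivity, hE, hF,
    hsum.trans (Finset.sum_congr rfl fun j _ => hterm j), ?_⟩
  rw [hsum, map_sum, norm_sum_sq_eq_sum_norm_sq_of_pairwise_inner_eq_zero (𝕜 := ℂ)]
  · simp only [norm_frobeniusLinearEquiv_kronecker]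
  · intro j k hjk
    simp only [inner_frobeniusLinearEquiv_kronecker, horth hjk, mul_zero]

end Frobenius

section ProductStateBound

open scoped MatrixOrder

variable [Fintype ι] [Fintype n]

noncomputable def mixture (s : ι → ℝ) (E : ι → Matrix m n ℂ) : Matrix m m ℂ :=
  (∑ i, s i)⁻¹ • ∑ i, s i • (E i * (E i)ᴴ)

theorem smul_mixture {s : ι → ℝ} (hs : ∑ i, s i ≠ 0) (E : ι → Matrix m n ℂ) :
    (∑ i, s i) • mixture s E = ∑ i, s i • (E i * (E i)ᴴ) :=
  smul_inv_smul₀ hs _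

variable [Fintype m]

theorem posSemidef_mixture {s : ι → ℝ} (hs : ∀ i, 0 ≤ s i) (E : ι → Matrix m n ℂ) :
    (mixture s E).PosSemidef :=
  (posSemidef_sum _ fun i _ => (posSemidef_self_mul_conjTranspose (E i)).smul (hs i)).smul
    (inv_nonneg.2 (Finset.sum_nonneg fun i _ => hs i))

theorem trace_mixture {s : ι → ℝ} (hs : ∑ i, s i ≠ 0) {E : ι → Matrix m n ℂ}
    (hE : ∀ i, ‖φ (E i)‖ = 1) : (mixture s E).trace = 1 := by
  simp only [mixture, trace_smul, trace_sum, trace_mul_comm (E _),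
    trace_conjTranspose_mul_self_eq_norm_sq, hE, one_pow, Complex.ofReal_one]
  rw [← Finset.sum_smul, smul_smul, inv_mul_cancel₀ hs, one_smul]

theorem sum_mul_conjTranspose_sum_le (X : ι → Matrix m n ℂ) :
    (∑ i, X i) * (∑ i, X i)ᴴ ≤ (Fintype.card ι : ℝ) • ∑ i, X i * (X i)ᴴ := by
  have hterm : ∀ i j, (X i - X j) * (X i - X j)ᴴ
      = X i * (X i)ᴴ + X j * (X j)ᴴ - X i * (X j)ᴴ - X j * (X i)ᴴ := fun i j => by
    simp only [conjTranspose_sub, Matrix.sub_mul, Matrix.mul_sub]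
    abel
  have hcross : ∑ i, ∑ j, X i * (X j)ᴴ = (∑ i, X i) * (∑ i, X i)ᴴ := by
    rw [conjTranspose_sum, Matrix.sum_mul]
    simp only [Matrix.mul_sum]
  have hexp : ∑ i, ∑ j, (X i - X j) * (X i - X j)ᴴ
      = (2 : ℝ) • ((Fintype.card ι : ℝ) • ∑ i, X i * (X i)ᴴ - (∑ i, X i) * (∑ i, X i)ᴴ) := by
    simp only [hterm, Finset.sum_sub_distrib, Finset.sum_add_distrib, Finset.sum_const,
      Finset.card_univ, ← Finset.smul_sum, hcross]
    rw [Finset.sum_comm (f := fun i j => X j * (X i)ᴴ), hcross, ← Nat.cast_smul_eq_nsmul ℝ]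
    module
  have hpsd : (∑ i, ∑ j, (X i - X j) * (X i - X j)ᴴ).PosSemidef :=
    posSemidef_sum _ fun i _ => posSemidef_sum _ fun j _ => posSemidef_self_mul_conjTranspose _
  rw [le_iff, ← inv_smul_smul₀ (two_ne_zero' ℝ) (_ - _), ← hexp]
  exact hpsd.smul (by norm_num)

variable [Fintype l] [Fintype p]

theorem sum_sq_smul_kronecker_le {s : ι → ℝ} (hs : ∀ i, 0 ≤ s i) {P : ι → Matrix l l ℂ}
    {Q : ι → Matrix m m ℂ} (hP : ∀ i, (P i).PosSemidef) (hQ : ∀ i, (Q i).PosSemidef) :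
    ∑ i, (s i ^ 2) • (P i ⊗ₖ Q i) ≤ (∑ i, s i • P i) ⊗ₖ (∑ i, s i • Q i) := by
  rw [sum_kronecker]
  refine Finset.sum_le_sum fun i _ => ?_
  rw [kronecker_sum]
  calc (s i ^ 2) • (P i ⊗ₖ Q i) = (s i • P i) ⊗ₖ (s i • Q i) := by
        rw [smul_kronecker, kronecker_smul, smul_smul, sq]
    _ ≤ _ := Finset.single_le_sum
        (fun j _ => (((hP i).smul (hs i)).kronecker ((hQ j).smul (hs j))).nonneg)
        (Finset.mem_univ i)

theorem mul_conjTranspose_le_smul_mixture_kronecker_mixture {s : ι → ℝ} (hs : ∀ i, 0 ≤ s i)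
    (hS : ∑ i, s i ≠ 0) (E : ι → Matrix l p ℂ) (F : ι → Matrix m n ℂ) :
    (∑ i, s i • (E i ⊗ₖ F i)) * (∑ i, s i • (E i ⊗ₖ F i))ᴴ
      ≤ ((Fintype.card ι : ℝ) * (∑ i, s i) ^ 2) • (mixture s E ⊗ₖ mixture s F) := by
  calc (∑ i, s i • (E i ⊗ₖ F i)) * (∑ i, s i • (E i ⊗ₖ F i))ᴴ
      ≤ (Fintype.card ι : ℝ) • ∑ i, (s i • (E i ⊗ₖ F i)) * (s i • (E i ⊗ₖ F i))ᴴ :=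
        sum_mul_conjTranspose_sum_le _
    _ = (Fintype.card ι : ℝ) • ∑ i, (s i ^ 2) • ((E i * (E i)ᴴ) ⊗ₖ (F i * (F i)ᴴ)) := by
        simp only [conjTranspose_smul, star_trivial, conjTranspose_kronecker, Matrix.smul_mul,
          Matrix.mul_smul, smul_smul, mul_kronecker_mul, sq]
    _ ≤ (Fintype.card ι : ℝ) • ((∑ i, s i • (E i * (E i)ᴴ)) ⊗ₖ (∑ i, s i • (F i * (F i)ᴴ))) :=
        smul_le_smul_of_nonneg_left (sum_sq_smul_kronecker_le hs
          (fun i => posSemidef_self_mul_conjTranspose _)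
          (fun i => posSemidef_self_mul_conjTranspose _)) (Nat.cast_nonneg _)
    _ = _ := by
        rw [← smul_mixture hS, ← smul_mixture hS, smul_kronecker, kronecker_smul, smul_smul,
          smul_smul, sq, mul_assoc]

theorem exists_states_mul_conjTranspose_le {s : ι → ℝ} (hs : ∀ i, 0 ≤ s i)
    (hs1 : ∑ i, s i ^ 2 = 1) {E : ι → Matrix l p ℂ} {F : ι → Matrix m n ℂ}
    (hE : ∀ i, ‖φ (E i)‖ = 1) (hF : ∀ i, ‖φ (F i)‖ = 1) :
    ∃ τL : Matrix l l ℂ, ∃ τR : Matrix m m ℂ,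
      τL.PosSemidef ∧ τL.trace = 1 ∧ τR.PosSemidef ∧ τR.trace = 1 ∧
      (∑ i, s i • (E i ⊗ₖ F i)) * (∑ i, s i • (E i ⊗ₖ F i))ᴴ
        ≤ ((Fintype.card ι : ℝ) ^ 2) • (τL ⊗ₖ τR) := by
  have hS : ∑ i, s i ≠ 0 := by
    intro h0
    have h := Finset.sum_sq_le_sq_sum_of_nonneg (s := Finset.univ) fun i _ => hs i
    rw [hs1, h0] at h
    norm_num at h
  have hcard : (Fintype.card ι : ℝ) * (∑ i, s i) ^ 2 ≤ (Fintype.card ι : ℝ) ^ 2 := by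
    have h := sq_sum_le_card_mul_sum_sq (s := Finset.univ) (f := s)
    rw [hs1, mul_one, Finset.card_univ] at h
    rw [sq (Fintype.card ι : ℝ)]
    exact mul_le_mul_of_nonneg_left h (Nat.cast_nonneg _)
  refine ⟨mixture s E, mixture s F, posSemidef_mixture hs E, trace_mixture hS hE,
    posSemidef_mixture hs F, trace_mixture hS hF, ?_⟩
  exact (mul_conjTranspose_le_smul_mixture_kronecker_mixture hs hS E F).trans <|
    smul_le_smul_of_nonneg_right hcard
      ((posSemidef_mixture hs E).kronecker (posSemidef_mixture hs F)).nonneg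

end ProductStateBound

end Matrix

theorem one_le_of_posSemidef_smul_sub {n : Type*} [Fintype n] {σ ρ : Matrix n n ℂ}
    (hσ : σ.trace = 1) (hρ : ρ.trace = 1) {t : ℝ} (h : (t • σ - ρ).PosSemidef) : 1 ≤ t := by
  have h0 := h.trace_nonneg
  rw [trace_sub, trace_smul, hσ, hρ, Complex.real_smul, mul_one, ← Complex.ofReal_one,
    ← Complex.ofReal_sub, Complex.zero_le_real] at h0
  linarith

theorem Imax_le_log {l r : Type*} [Fintype l] [DecidableEq l] [Fintype r] [DecidableEq r]
    {ρ : Matrix (l × r) (l × r) ℂ} (hρ : ρ.trace = 1) {σL : Matrix l l ℂ} {σR : Matrix r r ℂ}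
    (hσL : σL.PosSemidef) (hσL1 : σL.trace = 1) (hσR : σR.PosSemidef) (hσR1 : σR.trace = 1)
    {t : ℝ} (ht : (t • (σL ⊗ₖ σR) - ρ).PosSemidef) : Imax ρ ≤ Real.log t := by
  have hlb : ∀ {σL : Matrix l l ℂ} {σR : Matrix r r ℂ}, σL.trace = 1 → σR.trace = 1 →
      ∀ t ∈ {t : ℝ | (t • (σL ⊗ₖ σR) - ρ).PosSemidef}, 1 ≤ t := fun h1 h2 _ ht' =>
    one_le_of_posSemidef_smul_sub (by rw [trace_kronecker, h1, h2, one_mul]) hρ ht'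
  have hbdd : BddBelow {x : ℝ | ∃ σL : Matrix l l ℂ, ∃ σR : Matrix r r ℂ,
      σL.PosSemidef ∧ σL.trace = 1 ∧ σR.PosSemidef ∧ σR.trace = 1 ∧
      x = Real.log (sInf {t : ℝ | (t • (σL ⊗ₖ σR) - ρ).PosSemidef})} := by
    refine ⟨0, ?_⟩
    rintro _ ⟨σL, σR, -, h1, -, h2, rfl⟩
    rcases Set.eq_empty_or_nonempty {t : ℝ | (t • (σL ⊗ₖ σR) - ρ).PosSemidef} with h | h
    · simp [h]
    · exact Real.log_nonneg (le_csInf h (hlb h1 h2))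
  calc Imax ρ ≤ Real.log (sInf {t : ℝ | (t • (σL ⊗ₖ σR) - ρ).PosSemidef}) :=
        csInf_le hbdd ⟨σL, σR, hσL, hσL1, hσR, hσR1, rfl⟩
    _ ≤ Real.log t := Real.log_le_log (one_pos.trans_le (le_csInf ⟨t, ht⟩ (hlb hσL1 hσR1)))
        (csInf_le ⟨1, hlb hσL1 hσR1⟩ ht)

theorem MMdagger_le_product_general {l r : Type*} [Fintype l] [DecidableEq l]
    [Fintype r] [DecidableEq r]
    (D : ℕ) (α : Fin D → ℂ)
    (L : Fin D → Matrix l l ℂ) (R : Fin D → Matrix r r ℂ)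
    (M : Matrix (l × r) (l × r) ℂ)
    (hM : M = ∑ i, α i • (L i ⊗ₖ R i))
    (hM2 : (Mᴴ * M).trace = 1) :
    (∃ τL : Matrix l l ℂ, ∃ τR : Matrix r r ℂ,
      τL.PosSemidef ∧ τL.trace = 1 ∧ τR.PosSemidef ∧ τR.trace = 1 ∧
      (((D : ℝ) ^ 2) • (τL ⊗ₖ τR) - M * Mᴴ).PosSemidef) ∧
    Imax (M * Mᴴ) ≤ 2 * Real.log D := by
  have hne : Nonempty (l × r) := by
    by_contra h
    rw [not_nonempty_iff] at h
    simp [trace] at hM2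
  have : Nonempty l := hne.map Prod.fst
  have : Nonempty r := hne.map Prod.snd
  obtain ⟨s, E, F, hs, hE, hF, hMs, hnorm⟩ :=
    exists_sum_kronecker_eq_sum_smul_kronecker_normalized (fun i => α i • L i) R
  simp only [smul_kronecker, ← hM] at hMs hnorm
  have hs1 : ∑ j, s j ^ 2 = 1 := by
    rw [← hnorm]
    exact_mod_cast (trace_conjTranspose_mul_self_eq_norm_sq M).symm.trans hM2
  obtain ⟨τL, τR, hτL, hτL1, hτR, hτR1, hle⟩ := exists_states_mul_conjTranspose_le hs hs1 hE hF
  rw [← hMs, Fintype.card_fin] at hle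
  refine ⟨⟨τL, τR, hτL, hτL1, hτR, hτR1, le_iff.1 hle⟩, ?_⟩
  calc Imax (M * Mᴴ) ≤ Real.log ((D : ℝ) ^ 2) :=
        Imax_le_log (by rwa [trace_mul_comm]) hτL hτL1 hτR hτR1 (le_iff.1 hle)
    _ = 2 * Real.log D := by rw [Real.log_pow]; norm_num

/-- if `M = Σ_{i=1}^D α_i (L_i ⊗ R_i)` with `‖M‖₂ = 1`, then
`M Mᴴ ⪯ D² (τ_L ⊗ τ_R)` for some states `τ_L, τ_R`; consequently
`I_max(L:R)_{MMᴴ} ≤ 2 log D`. -/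
theorem MMdagger_le_product {l r : Type*} [Fintype l] [DecidableEq l]
    [Fintype r] [DecidableEq r]
    (D : ℕ) (hD : 0 < D) (α : Fin D → ℂ)
    (L : Fin D → Matrix l l ℂ) (R : Fin D → Matrix r r ℂ)
    (M : Matrix (l × r) (l × r) ℂ)
    (hM : M = ∑ i, α i • (L i ⊗ₖ R i))
    (hM2 : (Mᴴ * M).trace = 1) :
    (∃ τL : Matrix l l ℂ, ∃ τR : Matrix r r ℂ,
      τL.PosSemidef ∧ τL.trace = 1 ∧ τR.PosSemidef ∧ τR.trace = 1 ∧
      (((D : ℝ) ^ 2) • (τL ⊗ₖ τR) - M * Mᴴ).PosSemidef) ∧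
    Imax (M * Mᴴ) ≤ 2 * Real.log D :=
  MMdagger_le_product_general D α L R M hM hM2
end

section
/- (Gentle measurement) Let ρ be a positive semidefinite operator with Tr ρ ≤ 1, and Π an orthogonal projector. Then ‖ρ − ΠρΠ‖₁ ≤ 2√(Tr((1−Π)ρ)). -/
/-!
Write `ρ = BᴴB` and `Q = 1 - P`. Then `ρ - PρP = Qρ + PρQ = (QBᴴ) B + (PBᴴ)(BQ)`, and the trace
norm of a product is at most the product of the Hilbert–Schmidt norms of its factors: pairing
`X Y` against the singular vectors `uᵢ, vᵢ` of the whole sum gives `∑ ⟪Xᴴ uᵢ, Y vᵢ⟫`, which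
Cauchy–Schwarz and Bessel's inequality bound by `‖X‖₂ ‖Y‖₂`. The four Hilbert–Schmidt norms are
`√Tr(Qρ)`, `√Tr ρ`, `√Tr(Pρ)` and `√Tr(Qρ)`, and the middle two are at most `1`.
-/

open Matrix ComplexOrder

/-- Trace norm `‖A‖₁ = Tr √(AᴴA)`. -/
noncomputable def traceNorm {n : Type*} [Fintype n] [DecidableEq n]
    (A : Matrix n n ℂ) : ℝ :=
  ((Matrix.posSemidef_conjTranspose_mul_self A).1.eigenvectorUnitary.1 *
    diagonal (((↑) : ℝ → ℂ) ∘ Real.sqrt ∘ (Matrix.posSemidef_conjTranspose_mul_self A).1.eigenvalues) *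
    (star (Matrix.posSemidef_conjTranspose_mul_self A).1.eigenvectorUnitary : Matrix n n ℂ)).trace.re

open scoped InnerProductSpace

namespace Matrix

section StarProjection

variable {R n : Type*} [Fintype n] [CommRing R] [StarRing R]

lemma trace_conjTranspose_mul_self_mul_of_isStarProjection {P : Matrix n n R}
    (hP : IsStarProjection P) (B : Matrix n n R) :
    ((B * P)ᴴ * (B * P)).trace = (P * (Bᴴ * B)).trace := by
  have hPH : Pᴴ = P := hP.isSelfAdjoint
  have hPBBP : (B * P)ᴴ * (B * P) = P * (Bᴴ * B * P) := by
    simp only [conjTranspose_mul, hPH, Matrix.mul_assoc]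
  rw [hPBBP, trace_mul_comm, Matrix.mul_assoc, hP.isIdempotentElem.eq, trace_mul_comm]

lemma trace_mul_conjTranspose_self_mul_of_isStarProjection {P : Matrix n n R}
    (hP : IsStarProjection P) (B : Matrix n n R) :
    ((P * Bᴴ)ᴴ * (P * Bᴴ)).trace = (P * (Bᴴ * B)).trace := by
  have hPB : P * Bᴴ = (B * P)ᴴ := by
    rw [conjTranspose_mul, show Pᴴ = P from hP.isSelfAdjoint]
  rw [hPB, conjTranspose_conjTranspose, trace_mul_comm,
    trace_conjTranspose_mul_self_mul_of_isStarProjection hP]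

end StarProjection

variable {𝕜 : Type*} [RCLike 𝕜] {m n p : Type*} [Fintype m] [Fintype n] [Fintype p]
  [DecidableEq m] [DecidableEq n] [DecidableEq p]

lemma inner_toEuclideanLin_mul (X : Matrix m n 𝕜) (Y : Matrix n p 𝕜) (x : EuclideanSpace 𝕜 m)
    (y : EuclideanSpace 𝕜 p) :
    ⟪x, toEuclideanLin (X * Y) y⟫_𝕜 = ⟪toEuclideanLin Xᴴ x, toEuclideanLin Y y⟫_𝕜 := by
  rw [toEuclideanLin_conjTranspose_eq_adjoint, LinearMap.adjoint_inner_left, toLpLin_mul 2 2 2,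
    LinearMap.comp_apply]

lemma trace_eq_sum_inner_toEuclideanLin {ι : Type*} [Fintype ι] (A : Matrix n n 𝕜)
    (b : OrthonormalBasis ι 𝕜 (EuclideanSpace 𝕜 n)) :
    A.trace = ∑ j, ⟪b j, toEuclideanLin A (b j)⟫_𝕜 := by
  rw [← LinearMap.trace_eq_sum_inner, toEuclideanLin_eq_toLin_orthonormal,
    LinearMap.trace_eq_matrix_trace 𝕜 (EuclideanSpace.basisFun n 𝕜).toBasis,
    LinearMap.toMatrix_toLin]

lemma re_trace_conjTranspose_mul_self_eq_sum {ι : Type*} [Fintype ι] (X : Matrix m n 𝕜)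
    (b : OrthonormalBasis ι 𝕜 (EuclideanSpace 𝕜 n)) :
    RCLike.re (Xᴴ * X).trace = ∑ j, ‖toEuclideanLin X (b j)‖ ^ 2 := by
  simp only [trace_eq_sum_inner_toEuclideanLin _ b, inner_toEuclideanLin_mul,
    conjTranspose_conjTranspose, map_sum, inner_self_eq_norm_sq]

lemma sum_norm_sq_toEuclideanLin_le {ι : Type*} [Fintype ι] {v : ι → EuclideanSpace 𝕜 n}
    (hv : Orthonormal 𝕜 v) (X : Matrix m n 𝕜) :
    ∑ i, ‖toEuclideanLin X (v i)‖ ^ 2 ≤ RCLike.re (Xᴴ * X).trace := by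
  let b := EuclideanSpace.basisFun m 𝕜
  calc ∑ i, ‖toEuclideanLin X (v i)‖ ^ 2
      = ∑ j, ∑ i, ‖⟪v i, toEuclideanLin Xᴴ (b j)⟫_𝕜‖ ^ 2 := by
        rw [Finset.sum_comm]
        refine Finset.sum_congr rfl fun i _ ↦ ?_
        rw [← b.sum_sq_norm_inner_right]
        refine Finset.sum_congr rfl fun j _ ↦ ?_
        rw [norm_inner_symm, toEuclideanLin_conjTranspose_eq_adjoint, LinearMap.adjoint_inner_right]
    _ ≤ ∑ j, ‖toEuclideanLin Xᴴ (b j)‖ ^ 2 :=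
        Finset.sum_le_sum fun j _ ↦ hv.sum_inner_products_le _
    _ = RCLike.re (Xᴴ * X).trace := by
        rw [← re_trace_conjTranspose_mul_self_eq_sum, conjTranspose_conjTranspose, trace_mul_comm]

lemma sum_re_inner_toEuclideanLin_mul_le {ι : Type*} [Fintype ι] {u : ι → EuclideanSpace 𝕜 m}
    {v : ι → EuclideanSpace 𝕜 p} (hu : Orthonormal 𝕜 u) (hv : Orthonormal 𝕜 v)
    (X : Matrix m n 𝕜) (Y : Matrix n p 𝕜) :
    ∑ i, RCLike.re ⟪u i, toEuclideanLin (X * Y) (v i)⟫_𝕜 ≤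
      √(RCLike.re (Xᴴ * X).trace) * √(RCLike.re (Yᴴ * Y).trace) :=
  calc ∑ i, RCLike.re ⟪u i, toEuclideanLin (X * Y) (v i)⟫_𝕜
      ≤ ∑ i, ‖toEuclideanLin Xᴴ (u i)‖ * ‖toEuclideanLin Y (v i)‖ := by
        simp_rw [inner_toEuclideanLin_mul]
        exact Finset.sum_le_sum fun i _ ↦ re_inner_le_norm _ _
    _ ≤ √(∑ i, ‖toEuclideanLin Xᴴ (u i)‖ ^ 2) * √(∑ i, ‖toEuclideanLin Y (v i)‖ ^ 2) :=
        Real.sum_mul_le_sqrt_mul_sqrt _ _ _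
    _ ≤ √(RCLike.re (Xᴴ * X).trace) * √(RCLike.re (Yᴴ * Y).trace) := by
        have hX := sum_norm_sq_toEuclideanLin_le hu Xᴴ
        rw [conjTranspose_conjTranspose, trace_mul_comm] at hX
        gcongr
        exact sum_norm_sq_toEuclideanLin_le hv Y

lemma IsHermitian.toEuclideanLin_eigenvectorBasis {A : Matrix n n 𝕜} (hA : A.IsHermitian)
    (j : n) :
    toEuclideanLin A (hA.eigenvectorBasis j) = (hA.eigenvalues j : 𝕜) • hA.eigenvectorBasis j := by
  ext i
  simpa [toLpLin_apply] using congrFun (hA.mulVec_eigenvectorBasis j) i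

lemma inner_toEuclideanLin_eigenvectorBasis {A : Matrix m n 𝕜} (hA : (Aᴴ * A).IsHermitian)
    (i j : n) :
    ⟪toEuclideanLin A (hA.eigenvectorBasis i), toEuclideanLin A (hA.eigenvectorBasis j)⟫_𝕜 =
      if i = j then (hA.eigenvalues j : 𝕜) else 0 := by
  have hadj := inner_toEuclideanLin_mul Aᴴ A (hA.eigenvectorBasis i) (hA.eigenvectorBasis j)
  rw [conjTranspose_conjTranspose] at hadj
  rw [← hadj, hA.toEuclideanLin_eigenvectorBasis, inner_smul_right,
    orthonormal_iff_ite.mp hA.eigenvectorBasis.orthonormal]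
  simp

lemma traceNorm_eq_sum_sqrt_eigenvalues (A : Matrix n n ℂ) :
    traceNorm A = ∑ i, √((isHermitian_conjTranspose_mul_self A).eigenvalues i) := by
  rw [traceNorm, trace_mul_cycle, Unitary.coe_star_mul_self, one_mul, trace_diagonal,
    Complex.re_sum]
  simp

/-- The singular value decomposition: `vᵢ` runs over the eigenvectors of `Aᴴ A` with nonzero
eigenvalue `σᵢ²`, and `uᵢ = σᵢ⁻¹ A vᵢ`. -/
lemma exists_orthonormal_traceNorm_eq_sum_re_inner (A : Matrix n n ℂ) :
    ∃ (s : Finset n) (u v : s → EuclideanSpace ℂ n), Orthonormal ℂ u ∧ Orthonormal ℂ v ∧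
      traceNorm A = ∑ i, (⟪u i, toEuclideanLin A (v i)⟫_ℂ).re := by
  set hA := isHermitian_conjTranspose_mul_self A
  set σ : n → ℝ := fun i ↦ √(hA.eigenvalues i)
  have hσ_sq (i : n) : (σ i : ℂ) ^ 2 = hA.eigenvalues i := by
    rw [← Complex.ofReal_pow, Real.sq_sqrt (eigenvalues_conjTranspose_mul_self_nonneg A i)]
  let s := Finset.univ.filter fun i ↦ σ i ≠ 0
  have hσ_ne (i : s) : (σ i : ℂ) ≠ 0 := Complex.ofReal_ne_zero.mpr (Finset.mem_filter.mp i.2).2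
  have hinner (i j : s) : ⟪((σ i : ℂ)⁻¹) • toEuclideanLin A (hA.eigenvectorBasis i),
      toEuclideanLin A (hA.eigenvectorBasis j)⟫_ℂ = if i = j then (σ j : ℂ) else 0 := by
    rw [inner_smul_left, inner_toEuclideanLin_eigenvectorBasis]
    simp only [Subtype.val_inj, Complex.coe_algebraMap]
    split_ifs with hij
    · subst hij
      rw [← hσ_sq, map_inv₀, Complex.conj_ofReal]
      field_simp [hσ_ne i]
    · simp
  refine ⟨s, fun i ↦ ((σ i : ℂ)⁻¹) • toEuclideanLin A (hA.eigenvectorBasis i),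
    fun i ↦ hA.eigenvectorBasis i, ?_, hA.eigenvectorBasis.orthonormal.comp _ Subtype.val_injective,
    ?_⟩
  · refine orthonormal_iff_ite.mpr fun i j ↦ ?_
    rw [inner_smul_right, hinner]
    split_ifs with hij
    · subst hij
      exact inv_mul_cancel₀ (hσ_ne i)
    · simp
  · simp only [hinner, if_true, Complex.ofReal_re]
    rw [traceNorm_eq_sum_sqrt_eigenvalues, Finset.sum_coe_sort s σ, Finset.sum_filter_ne_zero]

lemma traceNorm_mul_add_mul_le (X₁ Y₁ X₂ Y₂ : Matrix n n ℂ) :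
    traceNorm (X₁ * Y₁ + X₂ * Y₂) ≤
      √((X₁ᴴ * X₁).trace.re) * √((Y₁ᴴ * Y₁).trace.re) +
        √((X₂ᴴ * X₂).trace.re) * √((Y₂ᴴ * Y₂).trace.re) := by
  obtain ⟨s, u, v, hu, hv, hnorm⟩ :=
    exists_orthonormal_traceNorm_eq_sum_re_inner (X₁ * Y₁ + X₂ * Y₂)
  simp only [hnorm, map_add, LinearMap.add_apply, inner_add_right, Complex.add_re,
    Finset.sum_add_distrib]
  exact add_le_add (sum_re_inner_toEuclideanLin_mul_le hu hv X₁ Y₁)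
    (sum_re_inner_toEuclideanLin_mul_le hu hv X₂ Y₂)

open scoped MatrixOrder in
lemma PosSemidef.exists_eq_conjTranspose_mul_self {A : Matrix n n ℂ} (hA : A.PosSemidef) :
    ∃ B : Matrix n n ℂ, A = Bᴴ * B :=
  CStarAlgebra.nonneg_iff_eq_star_mul_self.mp hA.nonneg

end Matrix

/-- gentle measurement: for a sub-state `ρ` and an orthogonal
projector `P`, `‖ρ − PρP‖₁ ≤ 2 √(Tr((1 − P)ρ))`. -/
theorem gentle_measurement {n : Type*} [Fintype n] [DecidableEq n]
    (ρ P : Matrix n n ℂ) (hρ : ρ.PosSemidef) (hρt : ρ.trace.re ≤ 1)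
    (hP : P.IsHermitian) (hP2 : P * P = P) :
    traceNorm (ρ - P * ρ * P) ≤ 2 * Real.sqrt (((1 - P) * ρ).trace.re) := by
  obtain ⟨B, rfl⟩ := hρ.exists_eq_conjTranspose_mul_self
  have hPproj : IsStarProjection P := ⟨hP2, hP⟩
  set Q := 1 - P
  have hQproj : IsStarProjection Q := hPproj.one_sub
  have hdecomp : Bᴴ * B - P * (Bᴴ * B) * P = Q * Bᴴ * B + P * Bᴴ * (B * Q) := by
    simp only [Q, sub_mul, mul_sub, one_mul, mul_one, Matrix.mul_assoc]
    abel
  have htrace : (P * (Bᴴ * B)).trace.re + (Q * (Bᴴ * B)).trace.re = (Bᴴ * B).trace.re := by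
    rw [← Complex.add_re, ← trace_add, ← add_mul, add_sub_cancel, one_mul]
  have hQρ_nonneg : 0 ≤ (Q * (Bᴴ * B)).trace.re := by
    rw [← trace_conjTranspose_mul_self_mul_of_isStarProjection hQproj]
    exact (Complex.nonneg_iff.mp (posSemidef_conjTranspose_mul_self (B * Q)).trace_nonneg).1
  calc traceNorm (Bᴴ * B - P * (Bᴴ * B) * P)
      ≤ √((Q * (Bᴴ * B)).trace.re) * √((Bᴴ * B).trace.re) +
          √((P * (Bᴴ * B)).trace.re) * √((Q * (Bᴴ * B)).trace.re) := by
        have h := traceNorm_mul_add_mul_le (Q * Bᴴ) B (P * Bᴴ) (B * Q)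
        rwa [trace_mul_conjTranspose_self_mul_of_isStarProjection hQproj,
          trace_mul_conjTranspose_self_mul_of_isStarProjection hPproj,
          trace_conjTranspose_mul_self_mul_of_isStarProjection hQproj, ← hdecomp] at h
    _ ≤ √((Q * (Bᴴ * B)).trace.re) * 1 + 1 * √((Q * (Bᴴ * B)).trace.re) := by
        gcongr <;> rw [Real.sqrt_le_one] <;> linarith
    _ = 2 * √((Q * (Bᴴ * B)).trace.re) := by ring
end

section
/- (Spectrum discretization) Let σ be a density matrix on ℂ^d and 0 < ε < 1. Define σ' by rounding each eigenvalue of σ lying in (ε⁴/d⁷, 1] up to the nearest value of the form (1+ε)^n · ε⁴/d⁷ and discarding eigenvalues ≤ ε⁴/d⁷. Then σ ⪯ σ' + (ε⁴/d⁷)·1, Π σ Π ⪯ σ' ⪯ (1+ε) Π σ Π where Π projects onto eigenvectors of σ with eigenvalue > ε⁴/d⁷, Tr σ' ≤ 1+ε, and the number of distinct eigenvalues of σ' is at most ⌈7 log(d/ε)/log(1+ε)⌉. -/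
/-!
Write `c = ε⁴/d⁷` and `r = rnd ε c`. Both `σ'` and `ΠσΠ` are functions of `σ` in the continuous
functional calculus (every function is continuous on the finite spectrum of a matrix), namely
`r` and the cutoff `x ↦ x·[c < x]`. The three Loewner inequalities are therefore monotonicity
of the functional calculus applied to the scalar inequalities `x ≤ r x + c` and
`x·[c < x] ≤ r x ≤ (1 + ε)·x·[c < x]`. Summing `r x ≤ (1 + ε) x` over the eigenvalues bounds the
trace, and the nonzero values of `r` on `[0, 1]` lie in `{(1 + ε)ⁿ c : 1 ≤ n ≤ ⌈log_{1+ε} (1/c)⌉}`,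
whose size is at most `⌈7 log (d/ε) / log (1 + ε)⌉` because `log (d⁷/ε⁴) ≤ 7 log (d/ε)`.
-/

open Matrix ComplexOrder

/-- Round `x ∈ (c, 1]` up to the nearest value `(1+ε)^n · c`; values `≤ c`
are discarded (sent to `0`). -/
noncomputable def rnd (ε c x : ℝ) : ℝ :=
  if x ≤ c then 0 else (1 + ε) ^ (⌈Real.logb (1 + ε) (x / c)⌉₊) * c

/-- The matrix `σ'` obtained from a Hermitian `σ` by rounding each eigenvalue
in `(ε⁴/d⁷, 1]` up to the nearest `(1+ε)^n · ε⁴/d⁷` and discarding the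
eigenvalues `≤ ε⁴/d⁷`. -/
noncomputable def discretize {d : ℕ} (ε : ℝ) (σ : Matrix (Fin d) (Fin d) ℂ)
    (h : σ.IsHermitian) : Matrix (Fin d) (Fin d) ℂ :=
  (h.eigenvectorUnitary : Matrix (Fin d) (Fin d) ℂ) *
    Matrix.diagonal (fun i => (rnd ε (ε ^ 4 / (d : ℝ) ^ 7) (h.eigenvalues i) : ℂ)) *
    (h.eigenvectorUnitary : Matrix (Fin d) (Fin d) ℂ)ᴴ

/-- The projector onto the eigenvectors of `σ` with eigenvalue `> ε⁴/d⁷`. -/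
noncomputable def bigEigProj {d : ℕ} (ε : ℝ) (σ : Matrix (Fin d) (Fin d) ℂ)
    (h : σ.IsHermitian) : Matrix (Fin d) (Fin d) ℂ :=
  (h.eigenvectorUnitary : Matrix (Fin d) (Fin d) ℂ) *
    Matrix.diagonal (fun i => if ε ^ 4 / (d : ℝ) ^ 7 < h.eigenvalues i then (1 : ℂ) else 0) *
    (h.eigenvectorUnitary : Matrix (Fin d) (Fin d) ℂ)ᴴ

open scoped MatrixOrder

namespace Real

theorem le_pow_natCeil_logb {b y : ℝ} (hb : 1 < b) (hy : 0 < y) : y ≤ b ^ ⌈logb b y⌉₊ :=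
  calc y = b ^ logb b y := (rpow_logb (by linarith) hb.ne' hy).symm
    _ ≤ b ^ (⌈logb b y⌉₊ : ℝ) := rpow_le_rpow_of_exponent_le hb.le (Nat.le_ceil _)
    _ = b ^ ⌈logb b y⌉₊ := rpow_natCast _ _

theorem pow_natCeil_logb_le {b y : ℝ} (hb : 1 < b) (hy : 1 ≤ y) : b ^ ⌈logb b y⌉₊ ≤ b * y :=
  calc b ^ ⌈logb b y⌉₊ = b ^ (⌈logb b y⌉₊ : ℝ) := (rpow_natCast _ _).symm
    _ ≤ b ^ (logb b y + 1) :=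
      rpow_le_rpow_of_exponent_le hb.le (Nat.ceil_lt_add_one (logb_nonneg hb hy)).le
    _ = b * y := by
      rw [rpow_add (by linarith), rpow_one, rpow_logb (by linarith) hb.ne' (by linarith),
        mul_comm]

theorem log_pow_div_pow_le {a b : ℝ} {m k : ℕ} (ha : 0 < a) (hb : 0 < b) (hb1 : b ≤ 1)
    (hmk : m ≤ k) : log (a ^ k / b ^ m) ≤ k * log (a / b) := by
  have hlogb : log b ≤ 0 := log_nonpos hb.le hb1
  have hmk' : (m : ℝ) ≤ k := by exact_mod_cast hmk
  rw [log_div (by positivity) (by positivity), log_pow, log_pow, log_div ha.ne' hb.ne']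
  nlinarith

end Real

section rnd

variable {ε c x : ℝ}

theorem rnd_of_le (h : x ≤ c) : rnd ε c x = 0 := if_pos h

theorem rnd_of_lt (h : c < x) : rnd ε c x = (1 + ε) ^ ⌈Real.logb (1 + ε) (x / c)⌉₊ * c :=
  if_neg h.not_ge

theorem rnd_nonneg (hε : 0 ≤ ε) (hc : 0 ≤ c) : 0 ≤ rnd ε c x := by
  unfold rnd
  split_ifs
  · exact le_rfl
  · exact mul_nonneg (pow_nonneg (by linarith) _) hc

theorem le_rnd_of_lt (hε : 0 < ε) (hc : 0 < c) (h : c < x) : x ≤ rnd ε c x := by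
  rw [rnd_of_lt h, ← div_le_iff₀ hc]
  exact Real.le_pow_natCeil_logb (by linarith) (div_pos (hc.trans h) hc)

theorem rnd_le_of_lt (hε : 0 < ε) (hc : 0 < c) (h : c < x) : rnd ε c x ≤ (1 + ε) * x := by
  rw [rnd_of_lt h, ← le_div_iff₀ hc, mul_div_assoc]
  exact Real.pow_natCeil_logb_le (by linarith) ((one_le_div hc).2 h.le)

theorem le_rnd_add (hε : 0 < ε) (hc : 0 < c) : x ≤ rnd ε c x + c := by
  rcases le_or_gt x c with h | h
  · simpa [rnd_of_le h] using h
  · linarith [le_rnd_of_lt hε hc h]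

theorem ite_le_rnd (hε : 0 < ε) (hc : 0 < c) : (if c < x then x else 0) ≤ rnd ε c x := by
  split_ifs with h
  · exact le_rnd_of_lt hε hc h
  · exact rnd_nonneg hε.le hc.le

theorem rnd_le_mul_ite (hε : 0 < ε) (hc : 0 < c) :
    rnd ε c x ≤ (1 + ε) * (if c < x then x else 0) := by
  split_ifs with h
  · exact rnd_le_of_lt hε hc h
  · simp [rnd_of_le (not_lt.1 h)]

theorem rnd_le_mul_self (hε : 0 < ε) (hc : 0 < c) (hx : 0 ≤ x) : rnd ε c x ≤ (1 + ε) * x := by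
  rcases le_or_gt x c with h | h
  · rw [rnd_of_le h]; exact mul_nonneg (by linarith) hx
  · exact rnd_le_of_lt hε hc h

theorem rnd_mem_image_pow {M : ℝ} (hε : 0 < ε) (hc : 0 < c) (h : c < x) (hxM : x ≤ M) :
    rnd ε c x ∈ (Finset.Icc 1 ⌈Real.logb (1 + ε) (M / c)⌉₊).image fun n => (1 + ε) ^ n * c := by
  have hb : 1 < 1 + ε := by linarith
  refine Finset.mem_image.2 ⟨_, Finset.mem_Icc.2 ⟨?_, ?_⟩, (rnd_of_lt h).symm⟩
  · exact Nat.one_le_iff_ne_zero.2 (Nat.ceil_pos.2 (Real.logb_pos hb ((one_lt_div hc).2 h))).ne'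
  · exact Nat.ceil_mono (Real.logb_le_logb_of_le hb (div_pos (hc.trans h) hc)
      (div_le_div_of_nonneg_right hxM hc.le))

theorem card_image_rnd_erase_zero_le {ι : Type*} [Fintype ι] {M : ℝ} (f : ι → ℝ)
    (hε : 0 < ε) (hc : 0 < c) (hf : ∀ i, f i ≤ M) :
    ((Finset.univ.image fun i => rnd ε c (f i)).erase 0).card ≤
      ⌈Real.logb (1 + ε) (M / c)⌉₊ := by
  have hsub : (Finset.univ.image fun i => rnd ε c (f i)).erase 0 ⊆
      (Finset.Icc 1 ⌈Real.logb (1 + ε) (M / c)⌉₊).image fun n => (1 + ε) ^ n * c := by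
    intro y hy
    obtain ⟨hy0, i, -, rfl⟩ := by simpa using hy
    rcases le_or_gt (f i) c with h | h
    · exact absurd (rnd_of_le h) hy0
    · exact rnd_mem_image_pow hε hc h (hf i)
  calc _ ≤ _ := Finset.card_le_card hsub
    _ ≤ (Finset.Icc 1 ⌈Real.logb (1 + ε) (M / c)⌉₊).card := Finset.card_image_le
    _ = _ := by simp

end rnd

namespace Matrix

variable {n 𝕜 : Type*} [RCLike 𝕜] [Fintype n] [DecidableEq n] {A : Matrix n n 𝕜}

theorem continuousOn_spectrum_real (A : Matrix n n 𝕜) (f : ℝ → ℝ) :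
    ContinuousOn f (spectrum ℝ A) :=
  A.finite_real_spectrum.continuousOn f

theorem IsHermitian.cfc_le_cfc (hA : A.IsHermitian) {f g : ℝ → ℝ}
    (hfg : ∀ i, f (hA.eigenvalues i) ≤ g (hA.eigenvalues i)) : cfc f A ≤ cfc g A :=
  cfc_mono (fun x hx => by
      obtain ⟨i, rfl⟩ := hA.spectrum_real_eq_range_eigenvalues ▸ hx
      exact hfg i)
    (A.continuousOn_spectrum_real f) (A.continuousOn_spectrum_real g)

theorem IsHermitian.trace_cfc (hA : A.IsHermitian) (f : ℝ → ℝ) :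
    (cfc f A).trace = ∑ i, (f (hA.eigenvalues i) : 𝕜) := by
  rw [hA.cfc_eq, IsHermitian.cfc, Unitary.conjStarAlgAut_apply, trace_mul_cycle,
    Unitary.coe_star_mul_self, one_mul, trace_diagonal]
  rfl

theorem IsHermitian.sum_eigenvalues_eq_re_trace (hA : A.IsHermitian) :
    ∑ i, hA.eigenvalues i = RCLike.re A.trace := by
  simp [hA.trace_eq_sum_eigenvalues]

theorem PosSemidef.eigenvalues_le_re_trace (hA : A.PosSemidef) (i : n) :
    hA.1.eigenvalues i ≤ RCLike.re A.trace :=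
  hA.1.sum_eigenvalues_eq_re_trace ▸
    Finset.single_le_sum (fun j _ => hA.eigenvalues_nonneg j) (Finset.mem_univ i)

end Matrix

section discretize

variable {d : ℕ} {ε : ℝ} {σ : Matrix (Fin d) (Fin d) ℂ}

theorem discretize_eq_cfc (h : σ.IsHermitian) :
    discretize ε σ h = cfc (rnd ε (ε ^ 4 / (d : ℝ) ^ 7)) σ := by
  rw [h.cfc_eq, IsHermitian.cfc, Unitary.conjStarAlgAut_apply]
  simp only [discretize, Function.comp_def, star_eq_conjTranspose]
  rfl

theorem bigEigProj_eq_cfc (h : σ.IsHermitian) :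
    bigEigProj ε σ h = cfc (fun x => if ε ^ 4 / (d : ℝ) ^ 7 < x then 1 else 0) σ := by
  rw [h.cfc_eq, IsHermitian.cfc, Unitary.conjStarAlgAut_apply]
  simp only [bigEigProj, Function.comp_def, star_eq_conjTranspose]
  congr 3 with i
  split_ifs <;> simp

theorem bigEigProj_mul_mul_bigEigProj (h : σ.IsHermitian) :
    bigEigProj ε σ h * σ * bigEigProj ε σ h =
      cfc (fun x => if ε ^ 4 / (d : ℝ) ^ 7 < x then x else 0) σ := by
  conv_lhs => enter [1, 2]; rw [← cfc_id' ℝ σ]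
  rw [bigEigProj_eq_cfc, ← cfc_mul _ _ _ (σ.continuousOn_spectrum_real _)
    (σ.continuousOn_spectrum_real _), ← cfc_mul _ _ _ (σ.continuousOn_spectrum_real _)
    (σ.continuousOn_spectrum_real _)]
  congr with x
  split_ifs <;> simp

theorem le_discretize_add_smul_one (hd : 0 < d) (hε : 0 < ε) (h : σ.IsHermitian) :
    σ ≤ discretize ε σ h + (ε ^ 4 / (d : ℝ) ^ 7) • 1 := by
  rw [discretize_eq_cfc, ← Algebra.algebraMap_eq_smul_one,
    ← cfc_add_const _ _ _ (σ.continuousOn_spectrum_real _)]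
  conv_lhs => rw [← cfc_id' ℝ σ]
  exact h.cfc_le_cfc fun i => le_rnd_add hε (by positivity)

theorem bigEigProj_mul_mul_bigEigProj_le_discretize (hd : 0 < d) (hε : 0 < ε)
    (h : σ.IsHermitian) : bigEigProj ε σ h * σ * bigEigProj ε σ h ≤ discretize ε σ h := by
  rw [bigEigProj_mul_mul_bigEigProj, discretize_eq_cfc]
  exact h.cfc_le_cfc fun i => ite_le_rnd hε (by positivity)

theorem discretize_le_smul_bigEigProj_mul_mul_bigEigProj (hd : 0 < d) (hε : 0 < ε)
    (h : σ.IsHermitian) :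
    discretize ε σ h ≤ (1 + ε) • (bigEigProj ε σ h * σ * bigEigProj ε σ h) := by
  rw [bigEigProj_mul_mul_bigEigProj, discretize_eq_cfc,
    ← cfc_const_mul _ _ _ (σ.continuousOn_spectrum_real _)]
  exact h.cfc_le_cfc fun i => rnd_le_mul_ite hε (by positivity)

theorem re_trace_discretize_le (hd : 0 < d) (hε : 0 < ε) (hσ : σ.PosSemidef)
    (htr : σ.trace = 1) : (discretize ε σ hσ.1).trace.re ≤ 1 + ε := by
  have hsum : ∑ i, hσ.1.eigenvalues i = 1 := by
    simpa [htr] using hσ.1.sum_eigenvalues_eq_re_trace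
  rw [discretize_eq_cfc, hσ.1.trace_cfc]
  simp only [Complex.re_sum]
  calc ∑ i, rnd ε (ε ^ 4 / (d : ℝ) ^ 7) (hσ.1.eigenvalues i)
      ≤ ∑ i, (1 + ε) * hσ.1.eigenvalues i := Finset.sum_le_sum fun i _ =>
        rnd_le_mul_self hε (by positivity) (hσ.eigenvalues_nonneg i)
    _ = 1 + ε := by rw [← Finset.mul_sum, hsum, mul_one]

theorem card_nonzero_discretized_eigenvalues_le (hd : 0 < d) (hε0 : 0 < ε) (hε1 : ε < 1)
    (hσ : σ.PosSemidef) (htr : σ.trace = 1) :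
    ((Finset.univ.image fun i =>
        rnd ε (ε ^ 4 / (d : ℝ) ^ 7) (hσ.1.eigenvalues i)).erase 0).card ≤
      ⌈7 * Real.log ((d : ℝ) / ε) / Real.log (1 + ε)⌉₊ := by
  have heig_le_one (i : Fin d) : hσ.1.eigenvalues i ≤ 1 := by
    simpa [htr] using hσ.eigenvalues_le_re_trace i
  refine (card_image_rnd_erase_zero_le _ hε0 (by positivity) heig_le_one).trans (Nat.ceil_mono ?_)
  rw [one_div_div, Real.logb]
  gcongr
  · exact (Real.log_pos (by linarith)).le
  · exact_mod_cast Real.log_pow_div_pow_le (a := d) (by positivity) hε0 hε1.le (by norm_num : 4 ≤ 7)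

end discretize

/-- spectrum discretization: for a density matrix `σ` on `ℂ^d`
and `0 < ε < 1`, the rounded matrix `σ'` satisfies `σ ⪯ σ' + (ε⁴/d⁷)·1`,
`ΠσΠ ⪯ σ' ⪯ (1+ε)ΠσΠ`, `Tr σ' ≤ 1+ε`, and it has at most
`⌈7 log(d/ε)/log(1+ε)⌉` distinct nonzero eigenvalues. -/
theorem spectrum_discretization {d : ℕ} (hd : 0 < d)
    (σ : Matrix (Fin d) (Fin d) ℂ) (hσ : σ.PosSemidef) (hσt : σ.trace = 1)
    (ε : ℝ) (hε0 : 0 < ε) (hε1 : ε < 1) :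
    ((discretize ε σ hσ.1 + (ε ^ 4 / (d : ℝ) ^ 7) • (1 : Matrix (Fin d) (Fin d) ℂ)
        - σ).PosSemidef) ∧
    ((discretize ε σ hσ.1 -
        bigEigProj ε σ hσ.1 * σ * bigEigProj ε σ hσ.1).PosSemidef) ∧
    (((1 + ε) • (bigEigProj ε σ hσ.1 * σ * bigEigProj ε σ hσ.1)
        - discretize ε σ hσ.1).PosSemidef) ∧
    (discretize ε σ hσ.1).trace.re ≤ 1 + ε ∧
    ((Finset.univ.image fun i =>
        rnd ε (ε ^ 4 / (d : ℝ) ^ 7) (hσ.1.eigenvalues i)).erase 0).card ≤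
      ⌈7 * Real.log ((d : ℝ) / ε) / Real.log (1 + ε)⌉₊ :=
  ⟨le_discretize_add_smul_one hd hε0 hσ.1,
    bigEigProj_mul_mul_bigEigProj_le_discretize hd hε0 hσ.1,
    discretize_le_smul_bigEigProj_mul_mul_bigEigProj hd hε0 hσ.1,
    re_trace_discretize_le hd hε0 hσ hσt,
    card_nonzero_discretized_eigenvalues_le hd hε0 hε1 hσ hσt⟩
end
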